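/- Let (E, I) be a matroid on a finite ground set with nonnegative real weights w : E → ℝ. The greedy algorithm that scans elements in nonincreasing order of weight, adding an element whenever doing so preserves independence, returns a basis of maximum total weight among all bases of the matroid. -/

import Mathlib

/-!
A greedy set is maximal independent among the elements scanned so far, so by augmentation every
prefix of the scan contains at least as many of its elements as of any other independent set.
As the scan is sorted by nonincreasing weight, a weight sum is a nonnegative combination of these
prefix counts (Abel summation), so the greedy set has maximum weight.
-/

/-- The greedy scan: process the list in order, adding an element whenever the
resulting set remains independent. -/
def greedy {α : Type*} [DecidableEq α] (Ind : Finset α → Prop) [DecidablePred Ind] :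
    List α → Finset α → Finset α
  | [], G => G
  | x :: xs, G =>
      if Ind (insert x G) then greedy Ind xs (insert x G) else greedy Ind xs G

open Finset

section

variable {α : Type*} [DecidableEq α]

theorem card_le_of_forall_indep_insert_mem {Ind : Finset α → Prop}
    (hAug : ∀ I J : Finset α, Ind I → Ind J → I.card < J.card → ∃ e ∈ J \ I, Ind (insert e I))
    {I J : Finset α} (hI : Ind I) (hJ : Ind J) (hmax : ∀ x ∈ J, Ind (insert x I) → x ∈ I) :
    #J ≤ #I := by
  by_contra! hlt
  obtain ⟨e, he, hind⟩ := hAug I J hI hJ hlt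
  exact (mem_sdiff.1 he).2 (hmax e (mem_sdiff.1 he).1 hind)

theorem sum_inter_eq_sum_inter_sub_add (F : Finset α) (l : List α) (a : α) (w : α → ℝ) :
    ∑ x ∈ F ∩ (l ++ [a]).toFinset, w x =
      ∑ x ∈ F ∩ l.toFinset, (w x - w a) + w a * #(F ∩ (l ++ [a]).toFinset) := by
  have hshift : ∑ x ∈ F ∩ l.toFinset, (w x - w a) =
      ∑ x ∈ F ∩ (l ++ [a]).toFinset, (w x - w a) := by
    refine sum_subset (inter_subset_inter_left (by simp [List.toFinset_append])) ?_
    intro x hx hx'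
    have : x = a := by simp_all
    simp [this]
  rw [hshift, sum_sub_distrib, sum_const, nsmul_eq_mul]
  ring

theorem sum_inter_le_of_card_inter_prefix_le {w : α → ℝ} {l : List α}
    (hw : ∀ x ∈ l, 0 ≤ w x) (hl : l.Pairwise fun a b => w b ≤ w a) {B G : Finset α}
    (hBG : ∀ p, p <+: l → #(B ∩ p.toFinset) ≤ #(G ∩ p.toFinset)) :
    ∑ x ∈ B ∩ l.toFinset, w x ≤ ∑ x ∈ G ∩ l.toFinset, w x := by
  induction l using List.reverseRecOn generalizing w with
  | nil => simp
  | append_singleton l a ih =>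
    -- `w a` is the smallest weight; the shifted weights `w - w a` stay sorted and nonnegative.
    obtain ⟨hl, -, hla⟩ := List.pairwise_append.1 hl
    have hsum := ih (w := fun x => w x - w a)
      (fun x hx => sub_nonneg.2 (hla x hx a (List.mem_singleton_self a)))
      (hl.imp fun h => sub_le_sub_right h _)
      (fun p hp => hBG p (hp.trans (List.prefix_append l [a])))
    have hcard : (#(B ∩ (l ++ [a]).toFinset) : ℝ) ≤ #(G ∩ (l ++ [a]).toFinset) :=
      mod_cast hBG _ (List.prefix_refl _)
    have hwa : 0 ≤ w a := hw a (by simp)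
    rw [sum_inter_eq_sum_inter_sub_add, sum_inter_eq_sum_inter_sub_add]
    exact add_le_add hsum (mul_le_mul_of_nonneg_left hcard hwa)

section Greedy

variable (Ind : Finset α → Prop) [DecidablePred Ind]

theorem greedy_append (l₁ l₂ : List α) (G : Finset α) :
    greedy Ind (l₁ ++ l₂) G = greedy Ind l₂ (greedy Ind l₁ G) := by
  induction l₁ generalizing G with
  | nil => rfl
  | cons a l ih => simp only [List.cons_append, greedy]; split <;> apply ih

theorem subset_greedy (l : List α) (G : Finset α) : G ⊆ greedy Ind l G := by
  induction l generalizing G with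
  | nil => rfl
  | cons a l ih =>
    simp only [greedy]
    split
    · exact (subset_insert a G).trans (ih _)
    · exact ih G

theorem greedy_subset_union (l : List α) (G : Finset α) : greedy Ind l G ⊆ G ∪ l.toFinset := by
  induction l generalizing G with
  | nil => simp [greedy]
  | cons a l ih =>
    simp only [greedy, List.toFinset_cons]
    split
    · exact (ih _).trans (by rw [insert_union, union_insert])
    · exact (ih G).trans (union_subset_union_right (subset_insert a _))

theorem indep_greedy {l : List α} {G : Finset α} (hG : Ind G) : Ind (greedy Ind l G) := by
  induction l generalizing G with
  | nil => exact hG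
  | cons a l ih =>
    simp only [greedy]
    split
    · exact ih ‹_›
    · exact ih hG

theorem mem_greedy_of_indep_insert (hSubset : ∀ I J : Finset α, J ⊆ I → Ind I → Ind J)
    {l : List α} {G : Finset α} {x : α} (hx : x ∈ l) (hind : Ind (insert x (greedy Ind l G))) :
    x ∈ greedy Ind l G := by
  induction l generalizing G with
  | nil => simp at hx
  | cons a l ih =>
    by_cases ha : Ind (insert a G)
    · simp only [greedy, if_pos ha] at hind ⊢
      obtain rfl | hx := List.mem_cons.1 hx
      · exact subset_greedy Ind l _ (mem_insert_self x G)
      · exact ih hx hind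
    · simp only [greedy, if_neg ha] at hind ⊢
      obtain rfl | hx := List.mem_cons.1 hx
      · exact absurd (hSubset _ _ (insert_subset_insert x (subset_greedy Ind l G)) hind) ha
      · exact ih hx hind

theorem card_inter_prefix_le_card_greedy_inter (hEmpty : Ind ∅)
    (hSubset : ∀ I J : Finset α, J ⊆ I → Ind I → Ind J)
    (hAug : ∀ I J : Finset α, Ind I → Ind J → I.card < J.card → ∃ e ∈ J \ I, Ind (insert e I))
    {B : Finset α} (hB : Ind B) {p l : List α} (hp : p <+: l) :
    #(B ∩ p.toFinset) ≤ #(greedy Ind l ∅ ∩ p.toFinset) := by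
  obtain ⟨q, rfl⟩ := hp
  calc #(B ∩ p.toFinset) ≤ #(greedy Ind p ∅) :=
        card_le_of_forall_indep_insert_mem hAug (indep_greedy Ind hEmpty)
          (hSubset B _ inter_subset_left hB) fun x hx =>
            mem_greedy_of_indep_insert Ind hSubset (List.mem_toFinset.1 (mem_inter.1 hx).2)
    _ ≤ #(greedy Ind (p ++ q) ∅ ∩ p.toFinset) := by
        refine card_le_card (subset_inter ?_ ?_)
        · rw [greedy_append]
          exact subset_greedy Ind q _
        · simpa using greedy_subset_union Ind p ∅

end Greedy

end

theorem greedy_max_weight_basis_general {α : Type*} [DecidableEq α]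
    (Ind : Finset α → Prop) [DecidablePred Ind]
    (hEmpty : Ind ∅)
    (hSubset : ∀ I J : Finset α, J ⊆ I → Ind I → Ind J)
    (hAug : ∀ I J : Finset α, Ind I → Ind J → I.card < J.card →
      ∃ e ∈ J \ I, Ind (insert e I))
    (w : α → ℝ) (hw : ∀ x, 0 ≤ w x)
    (l : List α) (hmem : ∀ x : α, x ∈ l)
    (hsorted : l.Pairwise (fun a b => w b ≤ w a)) :
    (Ind (greedy Ind l ∅) ∧
      ∀ J : Finset α, Ind J → greedy Ind l ∅ ⊆ J → J = greedy Ind l ∅) ∧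
    (∀ B : Finset α, Ind B → (∀ J : Finset α, Ind J → B ⊆ J → J = B) →
      ∑ j ∈ B, w j ≤ ∑ j ∈ greedy Ind l ∅, w j) := by
  refine ⟨⟨indep_greedy Ind hEmpty, fun J hJ hGJ => ?_⟩, fun B hB _ => ?_⟩
  · refine Subset.antisymm (fun x hx => ?_) hGJ
    exact mem_greedy_of_indep_insert Ind hSubset (hmem x) (hSubset J _ (insert_subset hx hGJ) hJ)
  · have hl (s : Finset α) : s ∩ l.toFinset = s :=
      inter_eq_left.2 fun x _ => List.mem_toFinset.2 (hmem x)
    simpa only [hl] using sum_inter_le_of_card_inter_prefix_le (fun x _ => hw x) hsorted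
      fun p hp => card_inter_prefix_le_card_greedy_inter Ind hEmpty hSubset hAug hB hp

/-- Greedy algorithm on a matroid with nonnegative weights: scanning all
elements in nonincreasing order of weight and adding an element whenever
independence is preserved returns a basis (a maximal independent set) of
maximum total weight among all bases. -/
theorem greedy_max_weight_basis {α : Type*} [DecidableEq α] [Fintype α]
    (Ind : Finset α → Prop) [DecidablePred Ind]
    (hEmpty : Ind ∅)
    (hSubset : ∀ I J : Finset α, J ⊆ I → Ind I → Ind J)
    (hAug : ∀ I J : Finset α, Ind I → Ind J → I.card < J.card →
      ∃ e ∈ J \ I, Ind (insert e I))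
    (w : α → ℝ) (hw : ∀ x, 0 ≤ w x)
    (l : List α) (hnodup : l.Nodup) (hmem : ∀ x : α, x ∈ l)
    (hsorted : l.Pairwise (fun a b => w b ≤ w a)) :
    (Ind (greedy Ind l ∅) ∧
      ∀ J : Finset α, Ind J → greedy Ind l ∅ ⊆ J → J = greedy Ind l ∅) ∧
    (∀ B : Finset α, Ind B → (∀ J : Finset α, Ind J → B ⊆ J → J = B) →
      ∑ j ∈ B, w j ≤ ∑ j ∈ greedy Ind l ∅, w j) :=
  greedy_max_weight_basis_general Ind hEmpty hSubset hAug w hw l hmem hsorted
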